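/- arXiv:1404.0838 — 3 statements merged into one kernel-verified Lean document; each statement's English description precedes it below -/
import Mathlib

section
/- For any group G of agents and any point (r,m): Γ, I, (r,m) ⊨ D_G φ if and only if Γ, I, (r,m) ⊨ ∃x (G ≈ x ∧ D_∅ (G ≈ x → φ)), where G ≈ x abbreviates ⋀_{i∈G} (i ≈ x). Hence every operator D_G is definable from the universal modality D_∅ together with global-state quantification and the local-state agreement construct. -/
/-- Syntax of extended temporal epistemic logic ETL(Ag, Pp, Var). -/
inductive Fml (Ag Pp Var : Type) : Type where
  | atom : Pp → Fml Ag Pp Var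
  | neg  : Fml Ag Pp Var → Fml Ag Pp Var
  | or   : Fml Ag Pp Var → Fml Ag Pp Var → Fml Ag Pp Var
  | all  : Fml Ag Pp Var → Fml Ag Pp Var
  | next : Fml Ag Pp Var → Fml Ag Pp Var
  | until_ : Fml Ag Pp Var → Fml Ag Pp Var → Fml Ag Pp Var
  | exG  : Var → Fml Ag Pp Var → Fml Ag Pp Var
  | lid  : Ag → Var → Fml Ag Pp Var
  | dk   : Set Ag → Fml Ag Pp Var → Fml Ag Pp Var
  | ck   : Set Ag → Fml Ag Pp Var → Fml Ag Pp Var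

namespace Fml
variable {Ag Pp Var : Type}

def and (φ ψ : Fml Ag Pp Var) : Fml Ag Pp Var := .neg (.or (.neg φ) (.neg ψ))
def impl (φ ψ : Fml Ag Pp Var) : Fml Ag Pp Var := .or (.neg φ) ψ

/-- Free variables of a formula. -/
def FV : Fml Ag Pp Var → Set Var
  | atom _ => ∅
  | neg φ => FV φ
  | or φ ψ => FV φ ∪ FV ψ
  | all φ => FV φ
  | next φ => FV φ
  | until_ φ ψ => FV φ ∪ FV ψ
  | exG x φ => FV φ \ {x}
  | lid _ x => {x}
  | dk _ φ => FV φ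
  | ck _ φ => FV φ

end Fml

section Semantics

variable {Ag Pp Var GS : Type} {L : Ag → Type} [DecidableEq Var]

/-- Satisfaction relation `Γ, I, (r,m) ⊨ φ` for an interpreted system whose runs are the
set `R` of maps `ℕ → GS`, with local-state projections `loc` and valuation `val`. -/
def Sat (loc : ∀ a : Ag, GS → L a) (R : Set (ℕ → GS)) (val : (ℕ → GS) → ℕ → Set Pp) :
    (Var → GS) → {r : ℕ → GS // r ∈ R} → ℕ → Fml Ag Pp Var → Prop
  | _, r, m, .atom p => p ∈ val r.1 m
  | Γ, r, m, .neg φ => ¬ Sat loc R val Γ r m φ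
  | Γ, r, m, .or φ ψ => Sat loc R val Γ r m φ ∨ Sat loc R val Γ r m ψ
  | Γ, r, m, .all φ =>
      ∀ r' : {r : ℕ → GS // r ∈ R}, (∀ k, k ≤ m → r'.1 k = r.1 k) → Sat loc R val Γ r' m φ
  | Γ, r, m, .next φ => Sat loc R val Γ r (m + 1) φ
  | Γ, r, m, .until_ φ ψ =>
      ∃ m', m ≤ m' ∧ Sat loc R val Γ r m' ψ ∧ ∀ k, m ≤ k → k < m' → Sat loc R val Γ r k φ
  | Γ, r, m, .exG x φ =>
      ∃ (r' : {r : ℕ → GS // r ∈ R}) (m' : ℕ),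
        Sat loc R val (Function.update Γ x (r'.1 m')) r m φ
  | Γ, r, m, .lid i x => loc i (r.1 m) = loc i (Γ x)
  | Γ, r, m, .dk G φ =>
      ∀ (r' : {r : ℕ → GS // r ∈ R}) (m' : ℕ),
        (∀ i ∈ G, loc i (r'.1 m') = loc i (r.1 m)) → Sat loc R val Γ r' m' φ
  | Γ, r, m, .ck G φ =>
      ∀ p' : {r : ℕ → GS // r ∈ R} × ℕ,
        Relation.ReflTransGen
          (fun a b => ∃ i ∈ G, loc i (a.1.1 a.2) = loc i (b.1.1 b.2)) (r, m) p' →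
        Sat loc R val Γ p'.1 p'.2 φ

end Semantics

namespace Fml
variable {Ag Pp Var : Type}
/-- A valid formula (used as the unit of finite conjunctions). -/
def tt (i0 : Ag) (x : Var) : Fml Ag Pp Var := .or (.lid i0 x) (.neg (.lid i0 x))
/-- Finite conjunction of a list of formulas (with a given unit). -/
def bigConj (base : Fml Ag Pp Var) (fs : List (Fml Ag Pp Var)) : Fml Ag Pp Var :=
  fs.foldr Fml.and base
end Fml

/-!
The right-hand side unfolds to: some global state `g` agrees with `r m` on every agent of `G`,
and `φ` holds at every point agreeing with `g` on `G` (binding `x` to `g` does not affect `φ`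
because `x ∉ FV φ`). Agreement with `g` on `G` is then the same as agreement with `r m` on `G`,
so the witness `g := r m` gives one direction and transitivity of equality the other.
-/

section Semantics

variable {Ag Pp Var GS : Type} {L : Ag → Type} [DecidableEq Var]
  (loc : ∀ a : Ag, GS → L a) (R : Set (ℕ → GS)) (val : (ℕ → GS) → ℕ → Set Pp)

theorem sat_congr_of_eqOn_FV (φ : Fml Ag Pp Var) {Γ Γ' : Var → GS} (h : Set.EqOn Γ Γ' φ.FV)
    (r : {r : ℕ → GS // r ∈ R}) (m : ℕ) :
    Sat loc R val Γ r m φ ↔ Sat loc R val Γ' r m φ := by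
  induction φ generalizing Γ Γ' r m with
  | atom p => rfl
  | neg φ ih => exact not_congr (ih h r m)
  | or φ ψ ihφ ihψ =>
    exact or_congr (ihφ (h.mono Set.subset_union_left) r m)
      (ihψ (h.mono Set.subset_union_right) r m)
  | all φ ih => exact forall_congr' fun r' => imp_congr_right fun _ => ih h r' m
  | next φ ih => exact ih h r (m + 1)
  | until_ φ ψ ihφ ihψ =>
    exact exists_congr fun m' => and_congr_right fun _ =>
      and_congr (ihψ (h.mono Set.subset_union_right) r m') <|
        forall_congr' fun k => imp_congr_right fun _ => imp_congr_right fun _ =>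
          ihφ (h.mono Set.subset_union_left) r k
  | exG y φ ih =>
    refine exists_congr fun r' => exists_congr fun m' => ih (fun z hz => ?_) r m
    by_cases hzy : z = y
    · simp [hzy]
    · simp [Function.update_of_ne hzy, h ⟨hz, hzy⟩]
  | lid i y => simp only [Sat, h rfl]
  | dk G φ ih =>
    exact forall_congr' fun r' => forall_congr' fun m' => imp_congr_right fun _ => ih h r' m'
  | ck G φ ih => exact forall_congr' fun p => imp_congr_right fun _ => ih h p.1 p.2

theorem sat_update_of_notMem_FV {φ : Fml Ag Pp Var} {x : Var} (hx : x ∉ φ.FV) (g : GS)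
    (Γ : Var → GS) (r : {r : ℕ → GS // r ∈ R}) (m : ℕ) :
    Sat loc R val (Function.update Γ x g) r m φ ↔ Sat loc R val Γ r m φ :=
  sat_congr_of_eqOn_FV loc R val φ
    (fun _ hy => Function.update_of_ne (ne_of_mem_of_not_mem hy hx) _ _) r m

variable (Γ : Var → GS) (r : {r : ℕ → GS // r ∈ R}) (m : ℕ)

theorem sat_and (φ ψ : Fml Ag Pp Var) :
    Sat loc R val Γ r m (φ.and ψ) ↔ Sat loc R val Γ r m φ ∧ Sat loc R val Γ r m ψ := by
  simp only [Fml.and, Sat, not_or, not_not]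

theorem sat_impl (φ ψ : Fml Ag Pp Var) :
    Sat loc R val Γ r m (φ.impl ψ) ↔ (Sat loc R val Γ r m φ → Sat loc R val Γ r m ψ) :=
  imp_iff_not_or.symm

theorem sat_tt (i0 : Ag) (x : Var) : Sat loc R val Γ r m (Fml.tt i0 x : Fml Ag Pp Var) :=
  em _

theorem sat_bigConj (base : Fml Ag Pp Var) (fs : List (Fml Ag Pp Var)) :
    Sat loc R val Γ r m (Fml.bigConj base fs) ↔
      Sat loc R val Γ r m base ∧ ∀ f ∈ fs, Sat loc R val Γ r m f := by
  induction fs with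
  | nil => simp [Fml.bigConj]
  | cons f fs ih =>
    rw [Fml.bigConj, List.foldr_cons, sat_and, ← Fml.bigConj, ih, List.forall_mem_cons]
    tauto

theorem sat_bigConj_lid (i0 : Ag) (x : Var) (G : Finset Ag) :
    Sat loc R val Γ r m (Fml.bigConj (Fml.tt i0 x) (G.toList.map (fun i => Fml.lid i x))) ↔
      ∀ i ∈ G, loc i (r.1 m) = loc i (Γ x) := by
  simp only [sat_bigConj, sat_tt, true_and, List.forall_mem_map, Finset.mem_toList, Sat]

theorem sat_dk_empty (φ : Fml Ag Pp Var) :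
    Sat loc R val Γ r m (.dk ∅ φ) ↔ ∀ r' m', Sat loc R val Γ r' m' φ := by
  simp only [Sat, Set.mem_empty_iff_false, false_imp_iff, forall_const]

end Semantics

/-- `D_G φ` is equivalent to `∃x ((G ≈ x) ∧ D_∅ ((G ≈ x) → φ))`, where
`G ≈ x` is the conjunction `⋀_{i∈G} (i ≈ x)`, provided `x` is not free in `φ`.
Hence every operator `D_G` is definable from the universal modality `D_∅` together with
global-state quantification and the local-state agreement construct. -/
theorem dk_definable_from_universal {Ag Pp Var GS : Type} {L : Ag → Type} [DecidableEq Var]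
    (loc : ∀ a : Ag, GS → L a) (R : Set (ℕ → GS)) (val : (ℕ → GS) → ℕ → Set Pp)
    (G : Finset Ag) (i0 : Ag) (x : Var) (φ : Fml Ag Pp Var) (hx : x ∉ φ.FV)
    (Γ : Var → GS) (r : {r : ℕ → GS // r ∈ R}) (m : ℕ) :
    Sat loc R val Γ r m (.dk (↑G) φ) ↔
    Sat loc R val Γ r m
      (.exG x (Fml.and (Fml.bigConj (Fml.tt i0 x) (G.toList.map (fun i => Fml.lid i x)))
        (.dk ∅ (Fml.impl (Fml.bigConj (Fml.tt i0 x) (G.toList.map (fun i => Fml.lid i x)))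
          φ)))) := by
  rw [Sat, Sat]
  simp only [sat_and, sat_dk_empty, sat_impl, sat_bigConj_lid, sat_update_of_notMem_FV loc R val hx,
    Function.update_self, Finset.mem_coe]
  constructor
  · exact fun h => ⟨r, m, fun _ _ => rfl, h⟩
  · rintro ⟨r₀, m₀, hr, hφ⟩ r' m' hr'
    exact hφ r' m' fun i hi => (hr' i hi).trans (hr i hi)
end

section
/- Let H, G be groups of agents, φ a formula not containing the variable x, and suppose each strategy profile for H occurring in I(E,Σ) occurs at some point. Then Γ, I(E,Σ), (r,m) ⊨ ∃x C_G(σ(H) ≈ x → φ) if and only if there exists a joint strategy profile α_H for H occurring in some run of I(E,Σ) such that for all points (r',m') with (r',m') ∼^C_G (r,m) at which the agents in H are using profile α_H, Γ[g/x], I(E,Σ), (r',m') ⊨ φ holds, where g is any global state with σ(H)-components equal to α_H. -/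
/-- An environment for agents `Ag`, with states `S`, actions `Act i`, local states `L i`. -/
structure Env (Ag S : Type) (Act L : Ag → Type) (Pp : Type) where
  init : Set S
  trans : S → (∀ i, Act i) → S → Prop
  obs : ∀ i : Ag, S → L i
  val : S → Set Pp

/-- A strategy: a nonempty set of enabled actions at each state. -/
def Strat (S A : Type) : Type := {f : S → Set A // ∀ s, (f s).Nonempty}

/-- Global states of the strategy space system `I(E,Σ)`. -/
structure GSS (Ag S : Type) (Act L : Ag → Type) : Type where
  env : S
  loc : ∀ i : Ag, L i
  str : ∀ i : Ag, Strat S (Act i)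

variable {Ag S : Type} {Act L : Ag → Type} {Pp : Type}

/-- The four run constraints of the strategy space system `I(E,Σ)`. -/
def IsRun (E : Env Ag S Act L Pp) (Sig : Set (∀ i, Strat S (Act i)))
    (r : ℕ → GSS Ag S Act L) : Prop :=
  ((r 0).env ∈ E.init ∧ (fun i => (r 0).str i) ∈ Sig) ∧
  (∀ m i, (r m).loc i = E.obs i (r m).env) ∧
  (∀ m, ∃ a : ∀ i, Act i,
      E.trans (r m).env a (r (m + 1)).env ∧ ∀ j, a j ∈ ((r m).str j).1 (r m).env) ∧
  (∀ m i, (r (m + 1)).str i = (r m).str i)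

/-- Agents of the strategy space system: ordinary agents, strategic agents `σ(i)`,
and the environment agent `e`. -/
inductive AgE (Ag : Type) : Type where
  | ag : Ag → AgE Ag
  | sg : Ag → AgE Ag
  | env : AgE Ag

/-- Local state types of the extended agents. -/
def LExt (Ag S : Type) (Act L : Ag → Type) : AgE Ag → Type
  | .ag i => L i
  | .sg i => Strat S (Act i)
  | .env => S

/-- Local state projections of the strategy space system: agent `i` sees its local
state, `σ(i)` sees agent `i`'s strategy, and `e` sees the state of the environment. -/
def locE {Ag S : Type} {Act L : Ag → Type} :
    ∀ a : AgE Ag, GSS Ag S Act L → LExt Ag S Act L a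
  | .ag i, g => g.loc i
  | .sg i, g => g.str i
  | .env, g => g.env

/-- The valuation of `I(E,Σ)`, inherited from the environment. -/
def valE {Ag S : Type} {Act L : Ag → Type} {Pp : Type} (E : Env Ag S Act L Pp) :
    (ℕ → GSS Ag S Act L) → ℕ → Set Pp :=
  fun r m => E.val (r m).env

/-!
The witness for `x` enters only through `σ(H) ≈ x`, since `x` is not free in `φ`, and
`σ(H) ≈ x` holds at a point exactly when the agents in `H` use the strategies of that
witness there. So `∃x` ranges over the `H`-profiles occurring in the system. The two
sides read `∼^C_G` in opposite directions, which is harmless because it is the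
reflexive-transitive closure of a symmetric relation.
-/

namespace Sat

variable {Ag Pp Var GS : Type} {L : Ag → Type} [DecidableEq Var]
  {loc : ∀ a : Ag, GS → L a} {R : Set (ℕ → GS)} {val : (ℕ → GS) → ℕ → Set Pp}

theorem congr_of_eqOn_FV (φ : Fml Ag Pp Var) {Γ Γ' : Var → GS} (h : Set.EqOn Γ Γ' φ.FV)
    (r : {r : ℕ → GS // r ∈ R}) (m : ℕ) :
    Sat loc R val Γ r m φ ↔ Sat loc R val Γ' r m φ := by
  induction φ generalizing Γ Γ' r m with
  | atom p => rfl
  | neg φ ih => exact not_congr (ih h r m)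
  | or φ ψ ih₁ ih₂ =>
      exact or_congr (ih₁ (h.mono Set.subset_union_left) r m)
        (ih₂ (h.mono Set.subset_union_right) r m)
  | all φ ih => exact forall_congr' fun r' => imp_congr Iff.rfl (ih h r' m)
  | next φ ih => exact ih h r (m + 1)
  | until_ φ ψ ih₁ ih₂ =>
      exact exists_congr fun m' => and_congr_right fun _ =>
        and_congr (ih₂ (h.mono Set.subset_union_right) r m')
          (forall_congr' fun k => imp_congr Iff.rfl <| imp_congr Iff.rfl <|
            ih₁ (h.mono Set.subset_union_left) r k)
  | exG y φ ih =>
      refine exists_congr fun r' => exists_congr fun m' => ih (fun v hv => ?_) r m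
      by_cases hvy : v = y
      · subst hvy
        simp only [Function.update_self]
      · simp only [Function.update_of_ne hvy]
        exact h ⟨hv, hvy⟩
  | lid i y => rw [Sat, Sat, h (Set.mem_singleton y)]
  | dk G φ ih => exact forall₂_congr fun r' m' => imp_congr Iff.rfl (ih h r' m')
  | ck G φ ih => exact forall_congr' fun p => imp_congr Iff.rfl (ih h p.1 p.2)

theorem update_of_notMem_FV {φ : Fml Ag Pp Var} {x : Var} (hx : x ∉ φ.FV) (Γ : Var → GS)
    (g : GS) (r : {r : ℕ → GS // r ∈ R}) (m : ℕ) :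
    Sat loc R val (Function.update Γ x g) r m φ ↔ Sat loc R val Γ r m φ :=
  congr_of_eqOn_FV φ (fun _ hv => Function.update_of_ne (ne_of_mem_of_not_mem hv hx) _ _) r m

theorem impl (Γ : Var → GS) (r : {r : ℕ → GS // r ∈ R}) (m : ℕ) (φ ψ : Fml Ag Pp Var) :
    Sat loc R val Γ r m (φ.impl ψ) ↔ (Sat loc R val Γ r m φ → Sat loc R val Γ r m ψ) :=
  imp_iff_not_or.symm

theorem bigConj_tt (Γ : Var → GS) (r : {r : ℕ → GS // r ∈ R}) (m : ℕ) (i₀ : Ag) (x : Var)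
    (fs : List (Fml Ag Pp Var)) :
    Sat loc R val Γ r m (Fml.bigConj (Fml.tt i₀ x) fs) ↔ ∀ f ∈ fs, Sat loc R val Γ r m f := by
  induction fs with
  | nil => simpa [Fml.bigConj, Fml.tt, Sat] using em _
  | cons f fs ih =>
      simp only [Fml.bigConj, List.foldr_cons, Fml.and, Sat, List.forall_mem_cons] at ih ⊢
      rw [← ih]
      tauto

theorem bigConj_tt_lid {ι : Type} (Γ : Var → GS) (r : {r : ℕ → GS // r ∈ R}) (m : ℕ)
    (i₀ : Ag) (x : Var) (l : List ι) (a : ι → Ag) :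
    Sat loc R val Γ r m (Fml.bigConj (Fml.tt i₀ x) (l.map fun i => Fml.lid (a i) x)) ↔
      ∀ i ∈ l, loc (a i) (r.1 m) = loc (a i) (Γ x) := by
  simp only [bigConj_tt, List.forall_mem_map, Sat]

end Sat

theorem Sat_bigConj_lid_sg_iff (E : Env Ag S Act L Pp) (Sig : Set (∀ i, Strat S (Act i)))
    {Var : Type} [DecidableEq Var] (H : Finset Ag) (x : Var) (Γ : Var → GSS Ag S Act L)
    (r : {r : ℕ → GSS Ag S Act L // r ∈ {r | IsRun E Sig r}}) (m : ℕ) :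
    Sat locE {r | IsRun E Sig r} (valE E) Γ r m
        (Fml.bigConj (Fml.tt AgE.env x) (H.toList.map fun i => Fml.lid (AgE.sg i) x)) ↔
      ∀ i ∈ H, (r.1 m).str i = (Γ x).str i := by
  simp only [Sat.bigConj_tt_lid, Finset.mem_toList]
  rfl

theorem exists_commonly_known_strategy_characterization_general {Var : Type} [DecidableEq Var]
    (E : Env Ag S Act L Pp) (Sig : Set (∀ i, Strat S (Act i)))
    (G : Set Ag) (H : Finset Ag) (x : Var) (φ : Fml (AgE Ag) Pp Var)
    (hx : x ∉ φ.FV)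
    (Γ : Var → GSS Ag S Act L)
    (r : {r : ℕ → GSS Ag S Act L // r ∈ {r | IsRun E Sig r}}) (m : ℕ) :
    Sat locE {r | IsRun E Sig r} (valE E) Γ r m
      (.exG x (.ck (AgE.ag '' G)
        (Fml.impl
          (Fml.bigConj (Fml.tt AgE.env x)
            (H.toList.map (fun i => Fml.lid (AgE.sg i) x)))
          φ))) ↔
    ∃ α : ∀ i : Ag, Strat S (Act i),
      (∃ (r₀ : {r : ℕ → GSS Ag S Act L // r ∈ {r | IsRun E Sig r}}) (m₀ : ℕ),
        ∀ i ∈ H, (r₀.1 m₀).str i = α i) ∧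
      ∀ (r' : {r : ℕ → GSS Ag S Act L // r ∈ {r | IsRun E Sig r}}) (m' : ℕ),
        Relation.ReflTransGen
          (fun a b => ∃ k ∈ AgE.ag '' G, locE k (a.1.1 a.2) = locE k (b.1.1 b.2))
          (r', m') (r, m) →
        (∀ i ∈ H, (r'.1 m').str i = α i) →
        ∀ g : GSS Ag S Act L, (∀ i ∈ H, g.str i = α i) →
          Sat locE {r | IsRun E Sig r} (valE E) (Function.update Γ x g) r' m' φ := by
  have : Std.Symm fun a b : {r : ℕ → GSS Ag S Act L // r ∈ {r | IsRun E Sig r}} × ℕ =>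
      ∃ k ∈ AgE.ag '' G, locE k (a.1.1 a.2) = locE k (b.1.1 b.2) :=
    ⟨fun _ _ ⟨k, hk, hloc⟩ => ⟨k, hk, hloc.symm⟩⟩
  simp only [Sat, Sat.impl, Sat_bigConj_lid_sg_iff, Function.update_self,
    Sat.update_of_notMem_FV hx]
  constructor
  · rintro ⟨r₀, m₀, h⟩
    exact ⟨fun i => (r₀.1 m₀).str i, ⟨r₀, m₀, fun _ _ => rfl⟩,
      fun r' m' hrel hstr _ _ => h (r', m') (Std.Symm.symm _ _ hrel) hstr⟩
  · rintro ⟨α, ⟨r₀, m₀, h₀⟩, h⟩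
    exact ⟨r₀, m₀, fun p hrel hstr =>
      h p.1 p.2 (Std.Symm.symm _ _ hrel) (fun i hi => (hstr i hi).trans (h₀ i hi))
        (r₀.1 m₀) h₀⟩

/-- Characterization of `∃x C_G(σ(H) ≈ x → φ)` in the strategy space
system `I(E,Σ)`, where `σ(H) ≈ x` is the conjunction `⋀_{i∈H} (σ(i) ≈ x)`.  Provided
`x` is not free in `φ` and each strategy profile for `H` occurring in `I(E,Σ)` occurs
at some point, the formula holds at `(r,m)` under `Γ` iff there is a joint strategy
profile `α` for `H` occurring at some point of `I(E,Σ)` such that for all points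
`(r',m')` with `(r',m') ∼^C_G (r,m)` at which the agents in `H` use `α`,
`Γ[g/x], I(E,Σ), (r',m') ⊨ φ` holds, where `g` is any global state whose
`σ(H)`-components equal `α`. -/
theorem exists_commonly_known_strategy_characterization {Var : Type} [DecidableEq Var]
    (E : Env Ag S Act L Pp) (Sig : Set (∀ i, Strat S (Act i)))
    (G : Set Ag) (H : Finset Ag) (x : Var) (φ : Fml (AgE Ag) Pp Var)
    (hx : x ∉ φ.FV)
    (hocc : ∀ (r : {r : ℕ → GSS Ag S Act L // r ∈ {r | IsRun E Sig r}}) (m : ℕ),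
      ∃ (r' : {r : ℕ → GSS Ag S Act L // r ∈ {r | IsRun E Sig r}}) (m' : ℕ),
        ∀ i ∈ H, (r'.1 m').str i = (r.1 m).str i)
    (Γ : Var → GSS Ag S Act L)
    (r : {r : ℕ → GSS Ag S Act L // r ∈ {r | IsRun E Sig r}}) (m : ℕ) :
    Sat locE {r | IsRun E Sig r} (valE E) Γ r m
      (.exG x (.ck (AgE.ag '' G)
        (Fml.impl
          (Fml.bigConj (Fml.tt AgE.env x)
            (H.toList.map (fun i => Fml.lid (AgE.sg i) x)))
          φ))) ↔
    ∃ α : ∀ i : Ag, Strat S (Act i),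
      (∃ (r₀ : {r : ℕ → GSS Ag S Act L // r ∈ {r | IsRun E Sig r}}) (m₀ : ℕ),
        ∀ i ∈ H, (r₀.1 m₀).str i = α i) ∧
      ∀ (r' : {r : ℕ → GSS Ag S Act L // r ∈ {r | IsRun E Sig r}}) (m' : ℕ),
        Relation.ReflTransGen
          (fun a b => ∃ k ∈ AgE.ag '' G, locE k (a.1.1 a.2) = locE k (b.1.1 b.2))
          (r', m') (r, m) →
        (∀ i ∈ H, (r'.1 m').str i = α i) →
        ∀ g : GSS Ag S Act L, (∀ i ∈ H, g.str i = α i) →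
          Sat locE {r | IsRun E Sig r} (valE E) (Function.update Γ x g) r' m' φ :=
  exists_commonly_known_strategy_characterization_general E Sig G H x φ hx Γ r m
end

section
/- The set of points p such that, letting α be the H-strategy profile at p, all points reachable from p by (⋃_{i∈G} ∼_i)-steps through points whose H-strategy profile is α satisfy φ, is the greatest fixpoint of the operator X ↦ ⋂_{i∈G} { p : ∀q (q ∼_i p ∧ q agrees with p on σ(H)-components) → q ∈ X ∩ [[φ]] }. -/
/-- Let `P` be the points of the strategy space system, `sim i` the
indistinguishability relations for `i ∈ G` (equivalence relations), `str p` the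
`σ(H)`-components (the joint strategy of the agents in `H`) at a point `p` and `Sφ`
the extension `[[φ]]`.  The greatest fixpoint of the monotone operator
`F(X) = ⋂_{i∈G} {p : ∀ q, (q ∼ᵢ p and q agrees with p on σ(H)) → q ∈ X ∩ [[φ]]}`
(which corresponds to `⋂_{i∈G} {p : ∀ q ∼^D_{{i}∪σ(H)} p, q ∈ X ∩ [[φ]]}`)
equals the set of points `p` such that every point reachable from `p` by
`⋃_{i∈G} ∼ᵢ`-steps through points whose `H`-strategy profile equals that of `p`
satisfies `φ`. -/
theorem gfp_common_knowledge_given_strategy {P Ag SH : Type} (G : Set Ag)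
    (hG : G.Nonempty) (sim : Ag → P → P → Prop)
    (hsim : ∀ i ∈ G, Equivalence (sim i)) (str : P → SH) (Sφ : Set P)
    (F : Set P →o Set P)
    (hF : ∀ X : Set P,
      F X = ⋂ i ∈ G, {p : P | ∀ q : P, sim i q p ∧ str q = str p → q ∈ X ∩ Sφ}) :
    OrderHom.gfp F =
      {p : P | ∀ q : P,
        Relation.ReflTransGen (fun a b => (∃ i ∈ G, sim i a b) ∧ str b = str a) p q →
        q ∈ Sφ} := by
  set rel : P → P → Prop :=
    fun a b => (∃ i ∈ G, sim i a b) ∧ str b = str a with hrel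
  set S : Set P := {p : P | ∀ q : P, Relation.ReflTransGen rel p q → q ∈ Sφ} with hS
  apply le_antisymm
  · -- gfp F ≤ S
    intro p hp q hq
    -- strengthen: every point reachable from a gfp point is in gfp ∩ Sφ
    have key : ∀ r : P, Relation.ReflTransGen rel p r → r ∈ OrderHom.gfp F := by
      intro r hr
      induction hr with
      | refl => exact hp
      | tail hab hstep ih =>
        rename_i b c
        have hfix : F (OrderHom.gfp F) = OrderHom.gfp F := OrderHom.map_gfp F
        have hb : b ∈ F (OrderHom.gfp F) := by rw [hfix]; exact ih
        rw [hF] at hb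
        obtain ⟨⟨i, hi, hsimbc⟩, hs⟩ := hstep
        have := Set.mem_iInter₂.mp hb i hi
        exact (this c ⟨(hsim i hi).symm hsimbc, hs⟩).1
    have hq' : q ∈ OrderHom.gfp F := key q hq
    have hfix : F (OrderHom.gfp F) = OrderHom.gfp F := OrderHom.map_gfp F
    have hq'' : q ∈ F (OrderHom.gfp F) := by rw [hfix]; exact hq'
    rw [hF] at hq''
    obtain ⟨i, hi⟩ := hG
    have := Set.mem_iInter₂.mp hq'' i hi
    exact (this q ⟨(hsim i hi).refl q, rfl⟩).2
  · -- S ≤ gfp F : show S is a postfixpoint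
    apply OrderHom.le_gfp
    intro p hp
    rw [hF]
    refine Set.mem_iInter₂.mpr fun i hi => ?_
    intro q ⟨hsimq, hstrq⟩
    have hstep : rel p q := ⟨⟨i, hi, (hsim i hi).symm hsimq⟩, hstrq⟩
    constructor
    · intro r hr
      exact hp r (Relation.ReflTransGen.head hstep hr)
    · exact hp q (Relation.ReflTransGen.single hstep)
end
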